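/- Let T be a Cartesian tree on m nodes whose left subtree has k-1 nodes and right subtree has m-k nodes. Then |ng(T)| = |ng(left(T))| + |ng(right(T))| + |ng(T, k-1)| + |ng(T, k)|, where the union defining ng(T) over swap positions is disjoint. -/

import Mathlib

/-!
An injective sequence realizing `node L R` has its minimum at position `|L| + 1` and realizes
`L` and `R` on either side of it. A swap inside the left (right) block keeps that minimum and acts
on the block alone; conversely, realizations of the two subtrees glue around a new minimum into a
realization of the node. So the swaps at positions `< |L|` and `> |L| + 1` yield exactly
`node S R` for `S ∈ ng(L)` and `node L S` for `S ∈ ng(R)`, and only the two swaps next to the root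
remain. Swaps at distinct positions give distinct trees, so the union over positions is disjoint.
-/

/-- Binary tree shapes (Cartesian trees are determined by their shape). -/
inductive BTree : Type
  | nil : BTree
  | node : BTree → BTree → BTree
deriving DecidableEq

namespace BTree

/-- Number of nodes. -/
def size : BTree → ℕ
  | nil => 0
  | node l r => size l + size r + 1

/-- Length of the leftmost path. -/
def LMP : BTree → ℕ
  | nil => 0
  | node l _ => LMP l + 1

/-- Length of the rightmost path. -/
def RMP : BTree → ℕ
  | nil => 0
  | node _ r => RMP r + 1

end BTree

/-- Minimum value of a list (0 for the empty list). -/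
def listMin : List ℤ → ℤ
  | [] => 0
  | a :: t => t.foldl min a

/-- Index (0-based) of the minimum of a list. -/
def minIdx (l : List ℤ) : ℕ := l.idxOf (listMin l)

/-- Cartesian tree of a list, with fuel for termination. -/
def ctreeAux : ℕ → List ℤ → BTree
  | 0, _ => .nil
  | _ + 1, [] => .nil
  | n + 1, a :: t =>
      let g := minIdx (a :: t)
      .node (ctreeAux n ((a :: t).take g)) (ctreeAux n ((a :: t).drop (g + 1)))

/-- Cartesian tree of a list: the root is the position of the minimum,
its subtrees are the Cartesian trees of the prefix and suffix around it. -/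
def ctreeL (l : List ℤ) : BTree := ctreeAux l.length l

/-- The factor x[a..b] (1-based positions) of a sequence, as a list. -/
def seqList (x : ℕ → ℤ) (a b : ℕ) : List ℤ :=
  (List.range (b + 1 - a)).map (fun k => x (a + k))

/-- Cartesian tree of the sequence x[1..m]. -/
def ctreeOf (m : ℕ) (x : ℕ → ℤ) : BTree := ctreeL (seqList x 1 m)

/-- Positions j < h (1-based) with x[j] < x[h]. -/
def PDset (x : ℕ → ℤ) (h : ℕ) : Finset ℕ :=
  (Finset.Ico 1 h).filter (fun j => x j < x h)

/-- Parent-distance table: PD_x[h] = h - max{j < h : x[j] < x[h]}, 0 if no such j. -/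
def PD (x : ℕ → ℤ) (h : ℕ) : ℕ :=
  if hs : (PDset x h).Nonempty then h - (PDset x h).max' hs else 0

/-- Positions h < j ≤ m with x[j] < x[h]. -/
def RPDset (m : ℕ) (x : ℕ → ℤ) (h : ℕ) : Finset ℕ :=
  (Finset.Ioc h m).filter (fun j => x j < x h)

/-- Reverse parent-distance table: RPD_x[h] = min{j > h : x[j] < x[h]} - h, 0 if no such j. -/
def RPD (m : ℕ) (x : ℕ → ℤ) (h : ℕ) : ℕ :=
  if hs : (RPDset m x h).Nonempty then (RPDset m x h).min' hs - h else 0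

/-- Referent of h: the smallest position j > h with x[j] < x[h], or -1 if none. -/
def refD (m : ℕ) (x : ℕ → ℤ) (h : ℕ) : ℤ :=
  if hs : (RPDset m x h).Nonempty then ((RPDset m x h).min' hs : ℤ) else -1

/-- Skipped-number table: SN_x[h] is the number of nodes on the rightmost path of the
left subtree of node h in C(x), i.e. the number of positions whose referent is h. -/
def SN (m : ℕ) (x : ℕ → ℤ) (h : ℕ) : ℕ :=
  ((Finset.Ico 1 h).filter (fun j => refD m x j = (h : ℤ))).card

/-- The swap τ(x,i): exchange the entries at positions i and i+1. -/
def swapAt (x : ℕ → ℤ) (i : ℕ) : ℕ → ℤ :=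
  fun j => if j = i then x (i + 1) else if j = i + 1 then x i else x j

/-- ng(T,i): the Cartesian trees obtained from a sequence realizing T by one swap
at position i (valid positions are 1 ≤ i ≤ m-1). -/
def ngi (m : ℕ) (T : BTree) (i : ℕ) : Set BTree :=
  { S | 1 ≤ i ∧ i + 1 ≤ m ∧ ∃ x : ℕ → ℤ, Set.InjOn x (Set.Icc 1 m) ∧
        ctreeOf m x = T ∧ S = ctreeOf m (swapAt x i) }

/-- ng(T): the swap neighbourhood of T. -/
def ng (m : ℕ) (T : BTree) : Set BTree := ⋃ i, ngi m T i

/-- Number of permutations of {1,...,n} whose Cartesian tree is A. -/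
noncomputable def permCount (n : ℕ) (A : BTree) : ℕ :=
  Set.ncard { σ : Equiv.Perm (Fin n) |
    ctreeL (List.ofFn (fun k : Fin n => ((σ k : ℕ) : ℤ) + 1)) = A }

/-- Product over all nodes t of A of the size of the subtree rooted at t. -/
def hookProd : BTree → ℕ
  | .nil => 1
  | .node l r => (BTree.node l r).size * hookProd l * hookProd r

namespace CartesianTree

open Function

lemma listMin_eq_min {l : List ℤ} (hl : l ≠ []) : listMin l = l.min hl := by
  cases l with
  | nil => contradiction
  | cons a t => rfl

lemma listMin_le {l : List ℤ} {a : ℤ} (ha : a ∈ l) : listMin l ≤ a := by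
  rw [listMin_eq_min (List.ne_nil_of_mem ha)]
  exact List.min_le_of_mem ha

lemma listMin_mem {l : List ℤ} (hl : l ≠ []) : listMin l ∈ l := by
  rw [listMin_eq_min hl]
  exact List.min_mem hl

lemma listMin_map {f : ℤ → ℤ} (hf : Monotone f) {l : List ℤ} (hl : l ≠ []) :
    listMin (l.map f) = f (listMin l) := by
  rw [listMin_eq_min (by simpa using hl), List.min_eq_iff]
  refine ⟨List.mem_map_of_mem (listMin_mem hl), ?_⟩
  simp only [List.mem_map, forall_exists_index, and_imp]
  rintro _ a ha rfl
  exact hf (listMin_le ha)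

lemma minIdx_lt_length {l : List ℤ} (hl : l ≠ []) : minIdx l < l.length :=
  List.idxOf_lt_length_of_mem (listMin_mem hl)

lemma getElem_minIdx {l : List ℤ} (hl : l ≠ []) :
    l[minIdx l]'(minIdx_lt_length hl) = listMin l :=
  List.getElem_idxOf _

lemma listMin_lt_getElem {l : List ℤ} {p : ℕ} (hp : p < minIdx l) (hpl : p < l.length) :
    listMin l < l[p] := by
  refine lt_of_le_of_ne (listMin_le (List.getElem_mem _)) fun h => ?_
  simpa [h] using List.not_of_lt_findIdx hp

lemma minIdx_map {f : ℤ → ℤ} (hf : StrictMono f) {l : List ℤ} (hl : l ≠ []) :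
    minIdx (l.map f) = minIdx l := by
  simp only [minIdx, listMin_map hf.monotone hl, List.idxOf, List.findIdx_map]
  congr 1
  funext a
  simp [hf.injective.eq_iff]

lemma ctreeAux_congr {n n' : ℕ} {l : List ℤ} (hn : l.length ≤ n) (hn' : l.length ≤ n') :
    ctreeAux n l = ctreeAux n' l := by
  induction n generalizing n' l with
  | zero => cases List.length_eq_zero_iff.mp (Nat.le_zero.mp hn); cases n' <;> rfl
  | succ n ih =>
    match l, n' with
    | [], 0 | [], _ + 1 => rfl
    | a :: t, 0 => simp at hn'
    | a :: t, n' + 1 =>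
      have hg := minIdx_lt_length (l := a :: t) (by simp)
      simp only [ctreeAux]
      rw [ih (n' := n') (by rw [List.length_take]; omega) (by rw [List.length_take]; omega),
        ih (n' := n') (by rw [List.length_drop]; omega) (by rw [List.length_drop]; omega)]

lemma ctreeL_eq_node {l : List ℤ} (hl : l ≠ []) :
    ctreeL l = .node (ctreeL (l.take (minIdx l))) (ctreeL (l.drop (minIdx l + 1))) := by
  obtain ⟨a, t, rfl⟩ := List.exists_cons_of_ne_nil hl
  have hg := minIdx_lt_length hl
  simp only [List.length_cons] at hg
  simp only [ctreeL, List.length_cons, ctreeAux]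
  rw [ctreeAux_congr (n' := (List.take _ _).length)
      (by rw [List.length_take, List.length_cons]; omega) le_rfl,
    ctreeAux_congr (n' := (List.drop _ _).length) (by simp) le_rfl]

theorem ctreeL_induction {P : List ℤ → Prop} (nil : P [])
    (node : ∀ l, l ≠ [] → P (l.take (minIdx l)) → P (l.drop (minIdx l + 1)) → P l)
    (l : List ℤ) : P l := by
  induction h : l.length using Nat.strong_induction_on generalizing l with
  | _ n ih =>
    rcases eq_or_ne l [] with rfl | hl
    · exact nil
    have hg := minIdx_lt_length hl
    exact node l hl (ih _ (by rw [List.length_take]; omega) _ rfl)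
      (ih _ (by rw [List.length_drop]; omega) _ rfl)

lemma size_ctreeL (l : List ℤ) : (ctreeL l).size = l.length := by
  induction l using ctreeL_induction with
  | nil => rfl
  | node l hl ihA ihB =>
    have hg := minIdx_lt_length hl
    rw [ctreeL_eq_node hl, BTree.size, ihA, ihB, List.length_take, List.length_drop]
    omega

lemma ctreeL_append {l₁ l₂ : List ℤ} {v : ℤ} (h₁ : ∀ a ∈ l₁, v < a) (h₂ : ∀ a ∈ l₂, v < a) :
    ctreeL (l₁ ++ v :: l₂) = .node (ctreeL l₁) (ctreeL l₂) := by
  have hne : l₁ ++ v :: l₂ ≠ [] := by simp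
  have hmin : listMin (l₁ ++ v :: l₂) = v := by
    refine le_antisymm (listMin_le (by simp)) ?_
    rcases List.mem_append.mp (listMin_mem hne) with h | h
    · exact (h₁ _ h).le
    · rcases List.mem_cons.mp h with h | h
      · exact h.ge
      · exact (h₂ _ h).le
  have hidx : minIdx (l₁ ++ v :: l₂) = l₁.length := by
    rw [minIdx, hmin, List.idxOf_append_of_notMem fun hv => lt_irrefl v (h₁ v hv)]
    simp
  rw [ctreeL_eq_node hne, hidx, List.take_left' rfl,
    show l₁ ++ v :: l₂ = (l₁ ++ [v]) ++ l₂ by simp, List.drop_left' (by simp)]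

lemma ctreeL_map {f : ℤ → ℤ} (hf : StrictMono f) (l : List ℤ) :
    ctreeL (l.map f) = ctreeL l := by
  induction l using ctreeL_induction with
  | nil => rfl
  | node l hl ihA ihB =>
    rw [ctreeL_eq_node hl, ctreeL_eq_node (by simpa using hl), minIdx_map hf hl,
      ← List.map_take, ← List.map_drop, ihA, ihB]

/-- In-order ancestry, 0-based: the node at in-order position `p` is `q` or an ancestor of it. -/
def anc : BTree → ℕ → ℕ → Prop
  | .nil, _, _ => False
  | .node L R, p, q =>
    if q < L.size then anc L p q
    else if L.size < p then anc R (p - (L.size + 1)) (q - (L.size + 1))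
    else p = L.size

theorem anc_ctreeL_iff (l : List ℤ) {p q : ℕ} (hpq : p ≤ q) (hq : q < l.length) :
    anc (ctreeL l) p q ↔ ∀ r, p ≤ r → r ≤ q → l.getD p 0 ≤ l.getD r 0 := by
  induction l using ctreeL_induction generalizing p q with
  | nil => simp at hq
  | node l hl ihA ihB =>
    set g := minIdx l
    have hg : g < l.length := minIdx_lt_length hl
    have hsize : (ctreeL (l.take g)).size = g := by rw [size_ctreeL, List.length_take]; omega
    rw [ctreeL_eq_node hl, anc, hsize]
    split_ifs with hqg hgp
    · rw [ihA hpq (by rw [List.length_take]; omega)]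
      simp only [List.getD_eq_getElem?_getD, List.getElem?_take]
      refine forall_congr' fun r => ?_
      constructor <;> intro h h₁ h₂ <;>
        simpa [show r < g by omega, show p < g by omega] using h h₁ h₂
    · rw [ihB (by omega) (by rw [List.length_drop]; omega)]
      simp only [List.getD_eq_getElem?_getD, List.getElem?_drop]
      constructor
      · intro h r h₁ h₂
        simpa [show g + 1 + (p - (g + 1)) = p by omega, show g + 1 + (r - (g + 1)) = r by omega]
          using h (r - (g + 1)) (by omega) (by omega)
      · intro h r h₁ h₂
        simpa [show g + 1 + (p - (g + 1)) = p by omega] using h (g + 1 + r) (by omega) (by omega)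
    · have hmin : l.getD g 0 = listMin l := by
        rw [List.getD_eq_getElem _ _ hg, getElem_minIdx hl]
      constructor
      · rintro rfl r - hr
        rw [hmin]
        exact listMin_le (by rw [List.getD_eq_getElem _ _ (by omega)]; exact List.getElem_mem _)
      · intro h
        by_contra hpg
        have := h g (by omega) (by omega)
        rw [hmin, List.getD_eq_getElem _ _ (by omega)] at this
        exact absurd this (not_le.mpr (listMin_lt_getElem (by omega) _))

lemma seqList_one (x : ℕ → ℤ) (m : ℕ) :
    seqList x 1 m = (List.range m).map (fun k => x (k + 1)) := by
  simp only [seqList, Nat.add_sub_cancel]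
  exact List.map_congr_left fun k _ => by rw [add_comm]

lemma getD_seqList {x : ℕ → ℤ} {m r : ℕ} (hr : r < m) : (seqList x 1 m).getD r 0 = x (r + 1) := by
  simp [seqList_one, hr]

lemma seqList_comp (f : ℤ → ℤ) (x : ℕ → ℤ) (m : ℕ) :
    seqList (f ∘ x) 1 m = (seqList x 1 m).map f := by
  simp [seqList_one]

lemma lt_of_mem_seqList {x : ℕ → ℤ} {n : ℕ} {c v : ℤ} (hx : ∀ j ∈ Set.Icc 1 n, c < x j)
    (hv : v ∈ seqList x 1 n) : c < v := by
  rw [seqList_one, List.mem_map] at hv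
  obtain ⟨k, hk, rfl⟩ := hv
  exact hx _ ⟨by omega, by rw [List.mem_range] at hk; omega⟩

lemma size_ctreeOf (m : ℕ) (x : ℕ → ℤ) : (ctreeOf m x).size = m := by
  simp [ctreeOf, size_ctreeL, seqList_one]

lemma ctreeOf_comp {f : ℤ → ℤ} (hf : StrictMono f) (m : ℕ) (x : ℕ → ℤ) :
    ctreeOf m (f ∘ x) = ctreeOf m x := by
  rw [ctreeOf, ctreeOf, seqList_comp, ctreeL_map hf]

def glue (a : ℕ) (y : ℕ → ℤ) (c : ℤ) (z : ℕ → ℤ) : ℕ → ℤ := fun j =>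
  if j ≤ a then y j else if j = a + 1 then c else z (j - (a + 1))

lemma glue_self (a : ℕ) (x : ℕ → ℤ) : glue a x (x (a + 1)) (fun j => x (j + (a + 1))) = x := by
  funext j
  simp only [glue]
  split_ifs with h₁ h₂
  · rfl
  · rw [h₂]
  · congr 1; omega

lemma seqList_glue (a b : ℕ) (y : ℕ → ℤ) (c : ℤ) (z : ℕ → ℤ) :
    seqList (glue a y c z) 1 (a + b + 1) = seqList y 1 a ++ c :: seqList z 1 b := by
  rw [seqList_one, seqList_one, seqList_one, add_assoc, List.range_add, List.range_succ_eq_map]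
  simp only [List.map_append, List.map_cons, List.map_map]
  congr 1
  · exact List.map_congr_left fun k hk => by
      rw [List.mem_range] at hk
      simp [glue, show k + 1 ≤ a by omega]
  · congr 1
    · simp [glue]
    · exact List.map_congr_left fun k _ => by simp [glue]

lemma ctreeOf_glue {a b : ℕ} {y z : ℕ → ℤ} {c : ℤ} (hy : ∀ j ∈ Set.Icc 1 a, c < y j)
    (hz : ∀ j ∈ Set.Icc 1 b, c < z j) :
    ctreeOf (a + b + 1) (glue a y c z) = .node (ctreeOf a y) (ctreeOf b z) := by
  rw [ctreeOf, seqList_glue, ctreeL_append (fun _ => lt_of_mem_seqList hy)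
    (fun _ => lt_of_mem_seqList hz)]
  rfl

def IsLeftMin (x : ℕ → ℤ) (p q : ℕ) : Prop := ∀ r, p ≤ r → r ≤ q → x p ≤ x r

lemma isLeftMin_succ_iff {x : ℕ → ℤ} {p : ℕ} : IsLeftMin x p (p + 1) ↔ x p ≤ x (p + 1) := by
  refine ⟨fun h => h _ (by omega) le_rfl, fun h r h₁ h₂ => ?_⟩
  obtain rfl | rfl : r = p ∨ r = p + 1 := by omega
  exacts [le_rfl, h]

lemma isLeftMin_add_two_iff {x : ℕ → ℤ} {p : ℕ} :
    IsLeftMin x p (p + 2) ↔ x p ≤ x (p + 1) ∧ x p ≤ x (p + 2) := by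
  refine ⟨fun h => ⟨h _ (by omega) (by omega), h _ (by omega) le_rfl⟩, fun h r h₁ h₂ => ?_⟩
  obtain rfl | rfl | rfl : r = p ∨ r = p + 1 ∨ r = p + 2 := by omega
  exacts [le_rfl, h.1, h.2]

lemma anc_ctreeOf_iff {m : ℕ} {x : ℕ → ℤ} {p q : ℕ} (hpq : p ≤ q) (hq : q < m) :
    anc (ctreeOf m x) p q ↔ IsLeftMin x (p + 1) (q + 1) := by
  rw [ctreeOf, anc_ctreeL_iff _ hpq (by simp [seqList_one, hq]), getD_seqList (by omega)]
  constructor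
  · intro h r h₁ h₂
    obtain ⟨r, rfl⟩ : ∃ r', r = r' + 1 := ⟨r - 1, by omega⟩
    have := h r (by omega) (by omega)
    rwa [getD_seqList (by omega)] at this
  · intro h r h₁ h₂
    rw [getD_seqList (by omega)]
    exact h (r + 1) (by omega) (by omega)

lemma isLeftMin_iff_of_ctreeOf_eq {m : ℕ} {x y : ℕ → ℤ} (h : ctreeOf m x = ctreeOf m y)
    {p q : ℕ} (hp : 1 ≤ p) (hpq : p ≤ q) (hq : q ≤ m) : IsLeftMin x p q ↔ IsLeftMin y p q := by
  obtain ⟨p, rfl⟩ : ∃ p', p = p' + 1 := ⟨p - 1, by omega⟩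
  obtain ⟨q, rfl⟩ : ∃ q', q = q' + 1 := ⟨q - 1, by omega⟩
  have hpq' : p ≤ q := by omega
  have hq' : q < m := by omega
  rw [← anc_ctreeOf_iff hpq' hq', ← anc_ctreeOf_iff hpq' hq', h]

lemma sides_of_ctreeOf_eq_node {m : ℕ} {x : ℕ → ℤ} {L R : BTree}
    (hx : Set.InjOn x (Set.Icc 1 m)) (h : ctreeOf m x = .node L R) :
    (∀ j ∈ Set.Icc 1 L.size, x (L.size + 1) < x j) ∧
      (∀ j ∈ Set.Icc 1 R.size, x (L.size + 1) < x (j + (L.size + 1))) ∧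
      ctreeOf L.size x = L ∧ ctreeOf R.size (fun j => x (j + (L.size + 1))) = R := by
  have hm : m ≠ 0 := by
    rintro rfl
    cases h
  obtain ⟨k, hk, hmin⟩ := (Finset.Icc 1 m).exists_min_image x (Finset.nonempty_Icc.mpr (by omega))
  rw [Finset.mem_Icc] at hk
  obtain ⟨a, rfl⟩ : ∃ a, k = a + 1 := ⟨k - 1, by omega⟩
  obtain ⟨b, rfl⟩ : ∃ b, m = a + b + 1 := ⟨m - (a + 1), by omega⟩
  have hlt : ∀ j ∈ Set.Icc 1 (a + b + 1), j ≠ a + 1 → x (a + 1) < x j := fun j hj hja =>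
    lt_of_le_of_ne (hmin j (Finset.mem_Icc.mpr hj)) (hx.ne ⟨by omega, by omega⟩ hj (Ne.symm hja))
  have hy : ∀ j ∈ Set.Icc 1 a, x (a + 1) < x j := fun j ⟨hj₁, hj₂⟩ =>
    hlt j ⟨hj₁, by omega⟩ (by omega)
  have hz : ∀ j ∈ Set.Icc 1 b, x (a + 1) < x (j + (a + 1)) := fun j ⟨hj₁, hj₂⟩ =>
    hlt _ ⟨by omega, by omega⟩ (by omega)
  have hnode := ctreeOf_glue (z := fun j => x (j + (a + 1))) hy hz
  rw [glue_self, h] at hnode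
  injection hnode with hL hR
  have haL : L.size = a := by rw [hL, size_ctreeOf]
  have hbR : R.size = b := by rw [hR, size_ctreeOf]
  rw [haL, hbR]
  exact ⟨hy, hz, hL.symm, hR.symm⟩

lemma swapAt_eq_comp (x : ℕ → ℤ) (i : ℕ) : swapAt x i = x ∘ Equiv.swap i (i + 1) := by
  funext j
  simp only [swapAt, Function.comp_apply, Equiv.swap_apply_def]
  split_ifs <;> rfl

lemma swapAt_comp (f : ℤ → ℤ) (x : ℕ → ℤ) (i : ℕ) : swapAt (f ∘ x) i = f ∘ swapAt x i := by
  rw [swapAt_eq_comp, swapAt_eq_comp, Function.comp_assoc]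

lemma mapsTo_swap_Icc {m i : ℕ} (hi : 1 ≤ i) (him : i + 1 ≤ m) :
    Set.MapsTo (Equiv.swap i (i + 1)) (Set.Icc 1 m) (Set.Icc 1 m) := by
  rintro j ⟨hj₁, hj₂⟩
  rw [Equiv.swap_apply_def]
  split_ifs <;> exact ⟨by omega, by omega⟩

lemma lt_swapAt {m i : ℕ} {x : ℕ → ℤ} {c : ℤ} (hx : ∀ j ∈ Set.Icc 1 m, c < x j) (hi : 1 ≤ i)
    (him : i + 1 ≤ m) : ∀ j ∈ Set.Icc 1 m, c < swapAt x i j := by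
  rw [swapAt_eq_comp]
  exact fun j hj => hx _ (mapsTo_swap_Icc hi him hj)

lemma swapAt_glue_left {a i : ℕ} (hi : i < a) (y : ℕ → ℤ) (c : ℤ) (z : ℕ → ℤ) :
    swapAt (glue a y c z) i = glue a (swapAt y i) c z := by
  funext j
  simp only [swapAt, glue]
  split_ifs <;> first | rfl | omega

lemma swapAt_glue_right {a i : ℕ} (hi : 1 ≤ i) (y : ℕ → ℤ) (c : ℤ) (z : ℕ → ℤ) :
    swapAt (glue a y c z) (i + (a + 1)) = glue a y c (swapAt z i) := by
  funext j
  simp only [swapAt, glue]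
  split_ifs <;> first | rfl | omega | (congr 1; omega)

lemma exists_lt_forall_le (x : ℕ → ℤ) (n : ℕ) : ∃ c, ∀ j ≤ n, c < x j := by
  obtain ⟨c, hc⟩ := ((Set.finite_Iic n).image x).bddBelow
  exact ⟨c - 1, fun j hj => by linarith [hc ⟨j, hj, rfl⟩]⟩

lemma glue_injOn {a b : ℕ} {y z : ℕ → ℤ} {c : ℤ} (hy : Set.InjOn y (Set.Icc 1 a))
    (hz : Set.InjOn z (Set.Icc 1 b)) (hyc : ∀ j ∈ Set.Icc 1 a, c < y j)
    (hzc : ∀ j ∈ Set.Icc 1 b, c < z j) (hyz : ∀ j ∈ Set.Icc 1 a, ∀ k ∈ Set.Icc 1 b, y j ≠ z k) :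
    Set.InjOn (glue a y c z) (Set.Icc 1 (a + b + 1)) := by
  rintro j ⟨hj₁, hj₂⟩ k ⟨hk₁, hk₂⟩ h
  simp only [glue] at h
  split_ifs at h with h₁ h₂ h₃ h₄ h₅ h₆ h₇ h₈
  · exact hy ⟨hj₁, h₁⟩ ⟨hk₁, h₂⟩ h
  · exact absurd h (hyc j ⟨hj₁, h₁⟩).ne'
  · exact absurd h (hyz j ⟨hj₁, h₁⟩ _ ⟨by omega, by omega⟩)
  · exact absurd h (hyc k ⟨hk₁, h₅⟩).ne
  · omega
  · exact absurd h (hzc _ ⟨by omega, by omega⟩).ne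
  · exact absurd h.symm (hyz k ⟨hk₁, h₇⟩ _ ⟨by omega, by omega⟩)
  · exact absurd h (hzc _ ⟨by omega, by omega⟩).ne'
  · have := hz ⟨by omega, by omega⟩ ⟨by omega, by omega⟩ h
    omega

lemma strictMono_two_mul : StrictMono (fun v : ℤ => 2 * v) := fun _ _ h => by simp [h]

lemma strictMono_two_mul_add_one : StrictMono (fun v : ℤ => 2 * v + 1) := fun _ _ h => by simp [h]

/-- Doubling the left values and sending the right ones to odd numbers keeps both Cartesian
trees (`ctreeOf_comp`) and makes the two sides disjoint. -/
lemma exists_glue_injOn {a b : ℕ} {y z : ℕ → ℤ} (hy : Set.InjOn y (Set.Icc 1 a))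
    (hz : Set.InjOn z (Set.Icc 1 b)) :
    ∃ c : ℤ, (∀ j ∈ Set.Icc 1 a, c < ((2 * ·) ∘ y) j) ∧
      (∀ j ∈ Set.Icc 1 b, c < ((2 * · + 1) ∘ z) j) ∧
      Set.InjOn (glue a ((2 * ·) ∘ y) c ((2 * · + 1) ∘ z)) (Set.Icc 1 (a + b + 1)) := by
  obtain ⟨c, hc⟩ := exists_lt_forall_le (fun j => min (y j) (z j)) (a + b)
  have hyc : ∀ j ∈ Set.Icc 1 a, 2 * c < ((2 * ·) ∘ y) j := fun j ⟨_, hj⟩ => by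
    have := hc j (by omega)
    simp only [Function.comp_apply, lt_min_iff] at this ⊢
    omega
  have hzc : ∀ j ∈ Set.Icc 1 b, 2 * c < ((2 * · + 1) ∘ z) j := fun j ⟨_, hj⟩ => by
    have := hc j (by omega)
    simp only [Function.comp_apply, lt_min_iff] at this ⊢
    omega
  refine ⟨2 * c, hyc, hzc, glue_injOn ?_ ?_ hyc hzc fun j _ k _ => ?_⟩
  · exact fun j hj k hk h => hy hj hk (by simpa using h)
  · exact fun j hj k hk h => hz hj hk (by simpa using h)
  · simp only [Function.comp_apply]
    omega

lemma exists_realizer (T : BTree) :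
    ∃ x : ℕ → ℤ, Set.InjOn x (Set.Icc 1 T.size) ∧ ctreeOf T.size x = T := by
  induction T with
  | nil => exact ⟨fun _ => 0, fun j hj => by simp [BTree.size] at hj, rfl⟩
  | node L R ihL ihR =>
    obtain ⟨y, hy, hyL⟩ := ihL
    obtain ⟨z, hz, hzR⟩ := ihR
    obtain ⟨c, hyc, hzc, hinj⟩ := exists_glue_injOn hy hz
    refine ⟨_, hinj, ?_⟩
    rw [BTree.size, ctreeOf_glue hyc hzc, ctreeOf_comp strictMono_two_mul,
      ctreeOf_comp strictMono_two_mul_add_one, hyL, hzR]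

lemma ctreeOf_swapAt_glue_left {a b i : ℕ} {y z : ℕ → ℤ} {c : ℤ}
    (hy : ∀ j ∈ Set.Icc 1 a, c < y j) (hz : ∀ j ∈ Set.Icc 1 b, c < z j) (hi : 1 ≤ i) (hia : i < a) :
    ctreeOf (a + b + 1) (swapAt (glue a y c z) i) =
      .node (ctreeOf a (swapAt y i)) (ctreeOf b z) := by
  rw [swapAt_glue_left hia, ctreeOf_glue (lt_swapAt hy hi hia) hz]

lemma ctreeOf_swapAt_glue_right {a b i : ℕ} {y z : ℕ → ℤ} {c : ℤ}
    (hy : ∀ j ∈ Set.Icc 1 a, c < y j) (hz : ∀ j ∈ Set.Icc 1 b, c < z j) (hi : 1 ≤ i) (hib : i < b) :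
    ctreeOf (a + b + 1) (swapAt (glue a y c z) (i + (a + 1))) =
      .node (ctreeOf a y) (ctreeOf b (swapAt z i)) := by
  rw [swapAt_glue_right hi, ctreeOf_glue hy (lt_swapAt hz hi hib)]

lemma ngi_node_left {L R : BTree} {i : ℕ} (hi : i < L.size) :
    ngi (L.size + R.size + 1) (.node L R) i = (BTree.node · R) '' ngi L.size L i := by
  ext S
  constructor
  · rintro ⟨hi₁, -, x, hx, hxT, rfl⟩
    obtain ⟨hy, hz, hL, hR⟩ := sides_of_ctreeOf_eq_node hx hxT
    refine ⟨_, ⟨hi₁, hi, x, hx.mono (Set.Icc_subset_Icc_right (by omega)), hL, rfl⟩, ?_⟩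
    have h := ctreeOf_swapAt_glue_left (z := fun j => x (j + (L.size + 1))) hy hz hi₁ hi
    rwa [glue_self, hR, eq_comm] at h
  · rintro ⟨_, ⟨hi₁, -, y, hy, hyL, rfl⟩, rfl⟩
    obtain ⟨z, hz, hzR⟩ := exists_realizer R
    obtain ⟨c, hyc, hzc, hinj⟩ := exists_glue_injOn hy hz
    refine ⟨hi₁, by omega, _, hinj, ?_, ?_⟩
    · rw [ctreeOf_glue hyc hzc, ctreeOf_comp strictMono_two_mul,
        ctreeOf_comp strictMono_two_mul_add_one, hyL, hzR]
    · rw [ctreeOf_swapAt_glue_left hyc hzc hi₁ hi, swapAt_comp, ctreeOf_comp strictMono_two_mul,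
        ctreeOf_comp strictMono_two_mul_add_one, hzR]

lemma ngi_node_right {L R : BTree} {i : ℕ} (hi : 1 ≤ i) :
    ngi (L.size + R.size + 1) (.node L R) (i + (L.size + 1)) =
      (BTree.node L ·) '' ngi R.size R i := by
  ext S
  constructor
  · rintro ⟨-, him, x, hx, hxT, rfl⟩
    obtain ⟨hy, hz, hL, hR⟩ := sides_of_ctreeOf_eq_node hx hxT
    have hiR : i < R.size := by omega
    refine ⟨_, ⟨hi, hiR, _, ?_, hR, rfl⟩, ?_⟩
    · rintro j ⟨hj₁, hj₂⟩ k ⟨hk₁, hk₂⟩ h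
      have := hx ⟨by omega, by omega⟩ ⟨by omega, by omega⟩ h
      omega
    have h := ctreeOf_swapAt_glue_right (z := fun j => x (j + (L.size + 1))) hy hz hi hiR
    rwa [glue_self, hL, eq_comm] at h
  · rintro ⟨_, ⟨-, hiR, z, hz, hzR, rfl⟩, rfl⟩
    obtain ⟨y, hy, hyL⟩ := exists_realizer L
    obtain ⟨c, hyc, hzc, hinj⟩ := exists_glue_injOn hy hz
    refine ⟨by omega, by omega, _, hinj, ?_, ?_⟩
    · rw [ctreeOf_glue hyc hzc, ctreeOf_comp strictMono_two_mul,
        ctreeOf_comp strictMono_two_mul_add_one, hyL, hzR]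
    · rw [ctreeOf_swapAt_glue_right hyc hzc hi hiR, swapAt_comp,
        ctreeOf_comp strictMono_two_mul, ctreeOf_comp strictMono_two_mul_add_one, hyL]

lemma swapAt_apply_self (x : ℕ → ℤ) (i : ℕ) : swapAt x i i = x (i + 1) := by simp [swapAt]

lemma swapAt_apply_succ (x : ℕ → ℤ) (i : ℕ) : swapAt x i (i + 1) = x i := by simp [swapAt]

lemma swapAt_apply_of_ne {x : ℕ → ℤ} {i j : ℕ} (h₁ : j ≠ i) (h₂ : j ≠ i + 1) :
    swapAt x i j = x j := by simp [swapAt, h₁, h₂]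

/-- A swap at `i` reverses the order of `x i` and `x (i + 1)`, which the tree records
(`isLeftMin_iff_of_ctreeOf_eq`) and a swap at `j ≥ i + 2` preserves; for `j = i + 1` the recorded
comparisons among `x i`, `x (i + 1)`, `x (i + 2)` are incompatible. -/
theorem ngi_disjoint_of_lt {m : ℕ} {T : BTree} {i j : ℕ} (hij : i < j) :
    Disjoint (ngi m T i) (ngi m T j) := by
  rw [Set.disjoint_left]
  rintro S ⟨hi, -, x, hx, hxT, rfl⟩ ⟨-, hjm, x', hx', hx'T, hS⟩
  have hT := hxT.trans hx'T.symm
  have hxne : x i ≠ x (i + 1) := hx.ne ⟨hi, by omega⟩ ⟨by omega, by omega⟩ (by omega)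
  have t₁ := isLeftMin_iff_of_ctreeOf_eq hT hi (Nat.le_succ i) (by omega)
  have s₁ := isLeftMin_iff_of_ctreeOf_eq hS hi (Nat.le_succ i) (by omega)
  obtain hfar | rfl : i + 1 < j ∨ j = i + 1 := by omega
  · simp (disch := omega) only [isLeftMin_succ_iff, swapAt_apply_self, swapAt_apply_succ,
      swapAt_apply_of_ne] at t₁ s₁
    omega
  have t₂ := isLeftMin_iff_of_ctreeOf_eq hT (by omega) (Nat.le_succ (i + 1)) (by omega)
  have s₂ := isLeftMin_iff_of_ctreeOf_eq hS (by omega) (Nat.le_succ (i + 1)) (by omega)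
  have t₃ := isLeftMin_iff_of_ctreeOf_eq hT hi (by omega : i ≤ i + 2) (by omega)
  have s₃ := isLeftMin_iff_of_ctreeOf_eq hS hi (by omega : i ≤ i + 2) (by omega)
  simp (disch := omega) only [isLeftMin_succ_iff, isLeftMin_add_two_iff, swapAt_apply_self,
    swapAt_apply_succ, swapAt_apply_of_ne] at t₁ s₁ t₂ s₂ t₃ s₃
  simp only [add_assoc, Nat.reduceAdd] at s₁ t₂ s₂ t₃ s₃
  omega

lemma pairwise_disjoint_ngi (m : ℕ) (T : BTree) : Pairwise (Disjoint on ngi m T) := by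
  intro i j hij
  rcases hij.lt_or_gt with h | h
  · exact ngi_disjoint_of_lt h
  · exact (ngi_disjoint_of_lt h).symm

lemma finite_setOf_size_le (n : ℕ) : {T : BTree | T.size ≤ n}.Finite := by
  induction n with
  | zero =>
    refine (Set.finite_singleton BTree.nil).subset fun T hT => ?_
    cases T with
    | nil => rfl
    | node L R => simp [BTree.size] at hT
  | succ n ih =>
    refine ((ih.image2 BTree.node ih).insert BTree.nil).subset fun T hT => ?_
    cases T with
    | nil => exact Set.mem_insert _ _
    | node L R =>
      have hT : L.size + R.size + 1 ≤ n + 1 := hT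
      exact Set.mem_insert_of_mem _
        (Set.mem_image2_of_mem (show L.size ≤ n by omega) (show R.size ≤ n by omega))

lemma finite_iUnion_ngi (m : ℕ) (T : BTree) : (⋃ i, ngi m T i).Finite := by
  refine (finite_setOf_size_le m).subset (Set.iUnion_subset fun i S hS => ?_)
  obtain ⟨-, -, x, -, -, rfl⟩ := hS
  exact (size_ctreeOf m _).le

lemma ncard_biUnion_union {ι α : Type*} {f : ι → Set α} (hf : Pairwise (Disjoint on f))
    (hfin : (⋃ i, f i).Finite) {s t : Set ι} (hst : Disjoint s t) :
    (⋃ i ∈ s ∪ t, f i).ncard = (⋃ i ∈ s, f i).ncard + (⋃ i ∈ t, f i).ncard := by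
  rw [Set.biUnion_union]
  refine Set.ncard_union_eq ?_ (hfin.subset ?_) (hfin.subset ?_)
  · exact Set.disjoint_iUnion₂_left.mpr fun i hi =>
      Set.disjoint_iUnion₂_right.mpr fun j hj => hf (hst.ne_of_mem hi hj)
  all_goals exact Set.iUnion₂_subset fun i _ => Set.subset_iUnion f i

lemma image_node_left_ng (L R : BTree) :
    (BTree.node · R) '' ng L.size L =
      ⋃ i ∈ Set.Iio L.size, ngi (L.size + R.size + 1) (.node L R) i := by
  ext S
  simp only [ng, Set.image_iUnion, Set.mem_iUnion, Set.mem_Iio, exists_prop]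
  constructor
  · rintro ⟨i, hS⟩
    have hi : i < L.size := by
      obtain ⟨_, ⟨-, hi, -⟩, -⟩ := hS
      omega
    exact ⟨i, hi, by rwa [ngi_node_left hi]⟩
  · rintro ⟨i, hi, hS⟩
    exact ⟨i, by rwa [ngi_node_left hi] at hS⟩

lemma image_node_right_ng (L R : BTree) :
    (BTree.node L ·) '' ng R.size R =
      ⋃ i ∈ Set.Ici (L.size + 2), ngi (L.size + R.size + 1) (.node L R) i := by
  ext S
  simp only [ng, Set.image_iUnion, Set.mem_iUnion, Set.mem_Ici, exists_prop]
  constructor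
  · rintro ⟨i, hS⟩
    have hi : 1 ≤ i := by
      obtain ⟨_, ⟨hi, -⟩, -⟩ := hS
      exact hi
    exact ⟨i + (L.size + 1), by omega, by rwa [ngi_node_right hi]⟩
  · rintro ⟨j, hj, hS⟩
    obtain ⟨i, rfl⟩ : ∃ i, j = i + (L.size + 1) := ⟨j - (L.size + 1), by omega⟩
    exact ⟨i, by rwa [ngi_node_right (by omega)] at hS⟩

theorem ncard_ng_node (L R : BTree) :
    (ng (L.size + R.size + 1) (.node L R)).ncard =
      (ng L.size L).ncard + (ng R.size R).ncard +
        (ngi (L.size + R.size + 1) (.node L R) L.size).ncard +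
        (ngi (L.size + R.size + 1) (.node L R) (L.size + 1)).ncard := by
  have hf := pairwise_disjoint_ngi (L.size + R.size + 1) (.node L R)
  have hfin := finite_iUnion_ngi (L.size + R.size + 1) (.node L R)
  have hidx : (Set.univ : Set ℕ) =
      Set.Iio L.size ∪ Set.Ici (L.size + 2) ∪ {L.size} ∪ {L.size + 1} := by
    ext i
    simp only [Set.mem_univ, Set.mem_union, Set.mem_Iio, Set.mem_Ici, Set.mem_singleton_iff,
      true_iff]
    omega
  rw [ng, ← Set.biUnion_univ, hidx, ncard_biUnion_union hf hfin, ncard_biUnion_union hf hfin,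
    ncard_biUnion_union hf hfin, Set.biUnion_singleton, Set.biUnion_singleton,
    ← image_node_left_ng, ← image_node_right_ng,
    Set.ncard_image_of_injective _ fun _ _ h => (BTree.node.inj h).1,
    Set.ncard_image_of_injective _ fun _ _ h => (BTree.node.inj h).2]
  all_goals
    rw [Set.disjoint_left]
    simp only [Set.mem_union, Set.mem_Iio, Set.mem_Ici, Set.mem_singleton_iff]
    omega

end CartesianTree

theorem stmt8 (m k : ℕ) (L R : BTree)
    (hsize : (BTree.node L R).size = m) (hL : L.size = k - 1) (hR : R.size = m - k) :
    (ng m (BTree.node L R)).ncard =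
      (ng (k - 1) L).ncard + (ng (m - k) R).ncard +
      (ngi m (BTree.node L R) (k - 1)).ncard + (ngi m (BTree.node L R) k).ncard := by
  rw [BTree.size] at hsize
  obtain rfl : k = L.size + 1 := by omega
  subst hsize
  rw [Nat.add_sub_cancel, ← hR]
  exact CartesianTree.ncard_ng_node L R
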